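/- arXiv:1405.7304 — 2 statements merged into one kernel-verified Lean document; each statement's English description precedes it below -/
import Mathlib

section
/- For all positive integers n and k and every integer m ≥ 0, the polynomials q̃_m satisfy the three-term recurrence q̃_{m+1}(y) = (y − 2m(k − m − n/2 − 1/2) − (n/2)(k − 1) − k)·q̃_m(y) − m(m − k)(m + n/2)(m − k + n/2 − 1)·q̃_{m−1}(y), where q̃_{−1}(y) := 0 (and q̃_0(y) = 1). -/
/-- Pochhammer symbol `(a)_l = a(a+1)⋯(a+l-1)`, with `(a)_0 = 1`. -/
noncomputable def poch (a : ℝ) (l : ℕ) : ℝ := ∏ i ∈ Finset.range l, (a + i)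

/-- The polynomial `q̃_m(y) = Σ_{l=0}^m (−1)^{m−l} (n/2+1+l)_{m−l} (k−m)_{m−l} C(m,l)
Π_{j=1}^l (y − j²)`. -/
noncomputable def qt (n k m : ℕ) (y : ℝ) : ℝ :=
  ∑ l ∈ Finset.range (m + 1),
    (-1 : ℝ) ^ (m - l) * poch ((n : ℝ) / 2 + 1 + l) (m - l) * poch ((k : ℝ) - m) (m - l)
      * (m.choose l) * ∏ j ∈ Finset.range l, (y - ((j : ℝ) + 1) ^ 2)

/-
Expand `q̃_m` in the Newton basis `P_l(y) = ∏_{j=1}^l (y - j²)`, on which multiplication by `y`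
acts as `y P_l = P_{l+1} + (l+1)² P_l`. The recurrence becomes a three-term identity between the
coefficients `c_m(l)` of `q̃_{m+2}`, `q̃_{m+1}`, `q̃_m`. Two first-order relations, one between
`c_{m+1}(l)` and `c_m(l)` and one between `c_m(l)` and `c_m(l+1)`, hold for all `m, l` (outside the
support they read `0 = 0`), and after multiplication by `m + 2 - l` the three-term identity is a
linear combination of them.
-/

open Finset

lemma poch_succ_right (a : ℝ) (l : ℕ) : poch a (l + 1) = poch a l * (a + l) :=
  prod_range_succ _ _

lemma poch_succ_left (a : ℝ) (l : ℕ) : poch a (l + 1) = a * poch (a + 1) l := by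
  simp only [poch, prod_range_succ', Nat.cast_add, Nat.cast_one, Nat.cast_zero, add_zero]
  rw [mul_comm]
  congr 1
  exact prod_congr rfl fun i _ => by ring

noncomputable def nodeProd (l : ℕ) (y : ℝ) : ℝ := ∏ j ∈ range l, (y - ((j : ℝ) + 1) ^ 2)

lemma nodeProd_succ (l : ℕ) (y : ℝ) :
    nodeProd (l + 1) y = nodeProd l y * (y - ((l : ℝ) + 1) ^ 2) :=
  prod_range_succ _ _

section Coefficients

variable (x t : ℝ)

noncomputable def qtCoeff (m l : ℕ) : ℝ :=
  (-1 : ℝ) ^ (m - l) * poch (x + 1 + l) (m - l) * poch (t - m) (m - l) * m.choose l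

noncomputable def qtGen (m : ℕ) (y : ℝ) : ℝ :=
  ∑ l ∈ range (m + 1), qtCoeff x t m l * nodeProd l y

lemma qt_eq_qtGen (n k m : ℕ) (y : ℝ) : qt n k m y = qtGen ((n : ℝ) / 2) k m y := rfl

variable {x t}

lemma qtCoeff_of_lt {m l : ℕ} (h : m < l) : qtCoeff x t m l = 0 := by
  simp [qtCoeff, Nat.choose_eq_zero_of_lt h]

lemma qtCoeff_self (m : ℕ) : qtCoeff x t m m = 1 := by
  simp [qtCoeff, poch]

lemma qtCoeff_succ_degree (m l : ℕ) :
    ((m : ℝ) + 1 - l) * qtCoeff x t (m + 1) l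
      = (x + m + 1) * (m + 1 - t) * (m + 1) * qtCoeff x t m l := by
  rcases lt_or_ge m l with hlt | hle
  · rw [qtCoeff_of_lt hlt, mul_zero]
    rcases (Nat.succ_le_of_lt hlt).eq_or_lt with rfl | hlt'
    · push_cast; ring
    · rw [qtCoeff_of_lt hlt', mul_zero]
  obtain ⟨d, rfl⟩ := Nat.exists_eq_add_of_le hle
  have hchoose : ((l + d).choose l : ℝ) * (l + d + 1) = ((l + d + 1).choose l) * (d + 1) := by
    have := Nat.choose_mul_succ_eq (l + d) l
    rw [show l + d + 1 - l = d + 1 by omega] at this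
    exact_mod_cast this
  simp only [qtCoeff, show l + d + 1 - l = d + 1 by omega, Nat.add_sub_cancel_left]
  rw [poch_succ_right, poch_succ_left, pow_succ]
  push_cast
  rw [show t - (l + d + 1) + 1 = t - (l + d) by ring]
  linear_combination (-1) ^ d * poch (x + 1 + l) d * poch (t - (l + d)) d * (x + 1 + l + d)
    * (t - (l + d + 1)) * hchoose

lemma qtCoeff_succ_index (m l : ℕ) :
    ((m : ℝ) - l) * qtCoeff x t m l
      = (x + l + 1) * (l + 1 - t) * (l + 1) * qtCoeff x t m (l + 1) := by
  rcases le_or_gt m l with hle | hlt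
  · rw [qtCoeff_of_lt (Nat.lt_succ_of_le hle), mul_zero]
    rcases hle.eq_or_lt with rfl | hlt'
    · ring
    · rw [qtCoeff_of_lt hlt', mul_zero]
  obtain ⟨d, rfl⟩ := Nat.exists_eq_add_of_lt hlt
  have hchoose :
      ((l + d + 1).choose l : ℝ) * (d + 1) = ((l + d + 1).choose (l + 1)) * (l + 1) := by
    have := Nat.choose_succ_right_eq (l + d + 1) l
    rw [show l + d + 1 - l = d + 1 by omega] at this
    exact_mod_cast this.symm
  simp only [qtCoeff, show l + d + 1 - l = d + 1 by omega, show l + d + 1 - (l + 1) = d by omega]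
  rw [poch_succ_left (x + 1 + l), poch_succ_right (t - _), pow_succ]
  push_cast
  rw [show x + 1 + ((l : ℝ) + 1) = x + 1 + l + 1 by ring]
  linear_combination (-1) ^ d * poch (x + 1 + l + 1) d * poch (t - (l + d + 1)) d * (x + 1 + l)
    * (l + 1 - t) * hchoose

lemma qtCoeff_shift_eq (m L : ℕ) :
    ((m : ℝ) + 1 - L) * (if L = 0 then 0 else qtCoeff x t m (L - 1))
      = (x + L) * (L - t) * L * qtCoeff x t m L := by
  rcases L with _ | l
  · simp
  · simpa [add_sub_add_right_eq_sub, add_assoc] using qtCoeff_succ_index (x := x) (t := t) m l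

lemma qtCoeff_three_term (m L : ℕ) :
    qtCoeff x t (m + 2) L
      = (if L = 0 then 0 else qtCoeff x t (m + 1) (L - 1))
        + (((L : ℝ) + 1) ^ 2 - (2 * (m + 1) * (t - (m + 1) - x - 1 / 2) + x * (t - 1) + t))
          * qtCoeff x t (m + 1) L
        - (m + 1) * (m + 1 - t) * (m + 1 + x) * (m - t + x) * qtCoeff x t m L := by
  rcases eq_or_ne L (m + 2) with rfl | hL
  · simp [qtCoeff_self, qtCoeff_of_lt]
  have hL' : ((m : ℝ) + 2 - L) ≠ 0 := by
    rw [sub_ne_zero]; exact_mod_cast hL.symm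
  have top := qtCoeff_succ_degree (x := x) (t := t) (m + 1) L
  have bottom := qtCoeff_succ_degree (x := x) (t := t) m L
  have shift := qtCoeff_shift_eq (x := x) (t := t) (m + 1) L
  push_cast at top shift
  refine mul_left_cancel₀ hL' ?_
  linear_combination top - shift - (m + 2 - L) * (m - t + x) * bottom

lemma qtGen_eq_sum_of_le (m N : ℕ) (hN : m + 1 ≤ N) (y : ℝ) :
    qtGen x t m y = ∑ l ∈ range N, qtCoeff x t m l * nodeProd l y := by
  refine sum_subset (range_subset_range.mpr hN) fun l _ hl => ?_
  rw [qtCoeff_of_lt (by simpa using hl), zero_mul]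

lemma qtGen_one (y : ℝ) : qtGen x t 1 y = (y - (x * (t - 1) + t)) * qtGen x t 0 y := by
  simp only [qtGen, Nat.reduceAdd, qtCoeff, poch, Nat.cast_one, nodeProd, sum_range_succ, range_one,
    sum_singleton, tsub_zero, pow_one, CharP.cast_eq_zero, add_zero, prod_singleton, neg_mul, one_mul,
    neg_add_rev, Nat.choose_succ_self_right, zero_add, mul_one, range_zero, prod_empty, tsub_self,
    pow_zero, Nat.choose_self, one_pow, zero_tsub]
  ring

lemma qtGen_succ_succ (m : ℕ) (y : ℝ) :
    qtGen x t (m + 2) y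
      = (y - (2 * (m + 1) * (t - (m + 1) - x - 1 / 2) + x * (t - 1) + t)) * qtGen x t (m + 1) y
        - (m + 1) * (m + 1 - t) * (m + 1 + x) * (m - t + x) * qtGen x t m y := by
  set a : ℝ := 2 * (m + 1) * (t - (m + 1) - x - 1 / 2) + x * (t - 1) + t
  set b : ℝ := (m + 1) * (m + 1 - t) * (m + 1 + x) * (m - t + x)
  have shifted :
      ∑ L ∈ range (m + 3), (if L = 0 then 0 else qtCoeff x t (m + 1) (L - 1)) * nodeProd L y
        = ∑ l ∈ range (m + 2), qtCoeff x t (m + 1) l * nodeProd (l + 1) y := by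
    simp [sum_range_succ' _ (m + 2)]
  have diagonal :
      ∑ L ∈ range (m + 3), (((L : ℝ) + 1) ^ 2 - a) * qtCoeff x t (m + 1) L * nodeProd L y
        = ∑ l ∈ range (m + 2),
            (((l : ℝ) + 1) ^ 2 - a) * qtCoeff x t (m + 1) l * nodeProd l y := by
    simp [sum_range_succ _ (m + 2), qtCoeff_of_lt]
  calc qtGen x t (m + 2) y
      = ∑ L ∈ range (m + 3), ((if L = 0 then 0 else qtCoeff x t (m + 1) (L - 1)) * nodeProd L y
          + (((L : ℝ) + 1) ^ 2 - a) * qtCoeff x t (m + 1) L * nodeProd L y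
          - b * (qtCoeff x t m L * nodeProd L y)) := by
        refine sum_congr rfl fun L _ => ?_
        rw [qtCoeff_three_term]
        ring
    _ = ∑ l ∈ range (m + 2),
            qtCoeff x t (m + 1) l * (nodeProd (l + 1) y + ((l + 1) ^ 2 - a) * nodeProd l y)
          - b * qtGen x t m y := by
        rw [sum_sub_distrib, sum_add_distrib, shifted, diagonal, ← mul_sum,
          ← qtGen_eq_sum_of_le m (m + 3) (by omega), ← sum_add_distrib]
        congr 1
        exact sum_congr rfl fun l _ => by ring
    _ = (y - a) * qtGen x t (m + 1) y - b * qtGen x t m y := by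
        rw [qtGen_eq_sum_of_le (m + 1) (m + 2) le_rfl, mul_sum]
        congr 1
        exact sum_congr rfl fun l _ => by rw [nodeProd_succ]; ring

end Coefficients

theorem stmt0_general (n k : ℕ) (m : ℕ) (y : ℝ) :
    qt n k (m + 1) y
      = (y - 2 * (m : ℝ) * ((k : ℝ) - m - (n : ℝ) / 2 - 1 / 2)
            - (n : ℝ) / 2 * ((k : ℝ) - 1) - k) * qt n k m y
        - (m : ℝ) * ((m : ℝ) - k) * ((m : ℝ) + (n : ℝ) / 2) * ((m : ℝ) - k + (n : ℝ) / 2 - 1)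
            * (if m = 0 then 0 else qt n k (m - 1) y) := by
  simp only [qt_eq_qtGen]
  rcases m with _ | m
  · rw [qtGen_one]
    push_cast
    ring
  · rw [if_neg m.succ_ne_zero, Nat.add_sub_cancel, qtGen_succ_succ]
    push_cast
    ring

/-- The three-term recurrence for `q̃_m`, with `q̃_{-1} := 0`. -/
theorem stmt0 (n k : ℕ) (hn : 0 < n) (hk : 0 < k) (m : ℕ) (y : ℝ) :
    qt n k (m + 1) y
      = (y - 2 * (m : ℝ) * ((k : ℝ) - m - (n : ℝ) / 2 - 1 / 2)
            - (n : ℝ) / 2 * ((k : ℝ) - 1) - k) * qt n k m y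
        - (m : ℝ) * ((m : ℝ) - k) * ((m : ℝ) + (n : ℝ) / 2) * ((m : ℝ) - k + (n : ℝ) / 2 - 1)
            * (if m = 0 then 0 else qt n k (m - 1) y) :=
  stmt0_general n k m y
end

section
/- In the polynomial ring ℤ[x,c], for every integer N ≥ 0 the element D_N := x·Π_{j=1}^N (x² − j²·c) lies in the subsemiring generated by {M_0, M_1, …, M_N}, where M_k := (−1)^k (k!)² c^k x; that is, D_N can be written as a polynomial with natural-number coefficients in M_0, …, M_N. -/
/-!
Since `D_{N+1} = x · (x D_N) + (N+1)² (−c) D_N`, the factors `(−c)^k` that build up when this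
recursion is unrolled are absorbed by the `M_k = (k!)² (−c)^k x`: by induction on `N`,
`((N+k)!/N!)² (−c)^k D_N` is a sum of products of `M_0, …, M_{N+k}`. The coefficient works
because `(k!)²` divides it, and multiplying it by `(N+1)²` gives the coefficient for `(k+1, N)`.
-/

open MvPolynomial

/-- `M_k := (−1)^k (k!)² c^k x` in `ℤ[x,c]`, where `x = X 0` and `c = X 1`. -/
noncomputable def Mop (k : ℕ) : MvPolynomial (Fin 2) ℤ :=
  C ((-1 : ℤ) ^ k * (k.factorial : ℤ) ^ 2) * (X 1) ^ k * X 0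

/-- `D_N := x·Π_{j=1}^N (x² − j²·c)` in `ℤ[x,c]`, where `x = X 0` and `c = X 1`. -/
noncomputable def Dop (N : ℕ) : MvPolynomial (Fin 2) ℤ :=
  X 0 * ∏ j ∈ Finset.range N, ((X 0) ^ 2 - C (((j : ℤ) + 1) ^ 2) * X 1)

open Nat

lemma Mop_eq_nsmul (k : ℕ) : Mop k = (k ! ^ 2) • ((-X 1) ^ k * X 0) := by
  rw [Mop, nsmul_eq_mul, neg_pow]
  simp only [map_mul, map_pow, map_neg, map_one, map_natCast]
  push_cast
  ring

lemma Mop_zero : Mop 0 = X 0 := by simp [Mop]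

lemma Dop_zero : Dop 0 = X 0 := by simp [Dop]

lemma Dop_succ (N : ℕ) :
    Dop (N + 1) = X 0 * (X 0 * Dop N) + (N + 1) ^ 2 • (-X 1 * Dop N) := by
  simp only [Dop, Finset.prod_range_succ, nsmul_eq_mul, map_pow, map_add, map_one,
    map_natCast]
  push_cast
  ring

lemma descFactorial_sq_nsmul_mem {S : Subsemiring (MvPolynomial (Fin 2) ℤ)} {n : ℕ}
    (hS : ∀ j ≤ n, Mop j ∈ S) (N k : ℕ) (hk : N + k ≤ n) :
    (N + k).descFactorial k ^ 2 • ((-X 1) ^ k * Dop N) ∈ S := by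
  induction N generalizing k with
  | zero =>
    rw [zero_add, descFactorial_self, Dop_zero, ← Mop_eq_nsmul]
    exact hS k (by omega)
  | succ N ih =>
    have hD : Dop N ∈ S := by simpa using ih 0 (by omega)
    obtain ⟨q, hq⟩ := factorial_dvd_descFactorial (N + 1 + k) k
    have hshift :
        (N + (k + 1)).descFactorial (k + 1) = (N + 1) * (N + 1 + k).descFactorial k := by
      rw [descFactorial_succ, show N + (k + 1) = N + 1 + k by omega]
      congr 1
      omega
    have hsplit : (N + 1 + k).descFactorial k ^ 2 • ((-X 1) ^ k * Dop (N + 1)) =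
        q ^ 2 • (Mop k * (Mop 0 * Dop N)) +
          (N + (k + 1)).descFactorial (k + 1) ^ 2 • ((-X 1) ^ (k + 1) * Dop N) := by
      rw [Dop_succ, Mop_eq_nsmul, Mop_zero, hshift, hq]
      simp only [nsmul_eq_mul]
      push_cast
      ring
    rw [hsplit]
    exact add_mem (nsmul_mem (mul_mem (hS k (by omega)) (mul_mem (hS 0 (by omega)) hD)) _)
      (ih (k + 1) (by omega))

/-- `D_N` is a polynomial with natural-number coefficients in `M_0, …, M_N`. -/
theorem stmt14 (N : ℕ) :
    ∃ P : MvPolynomial (Fin (N + 1)) ℕ,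
      MvPolynomial.aeval (fun k : Fin (N + 1) => Mop (k : ℕ)) P = Dop N := by
  let ev := MvPolynomial.aeval (R := ℕ) fun k : Fin (N + 1) => Mop (k : ℕ)
  have hM : ∀ j ≤ N, Mop j ∈ ev.range.toSubsemiring := fun j hj =>
    ⟨X ⟨j, lt_succ_of_le hj⟩, aeval_X _ _⟩
  simpa using descFactorial_sq_nsmul_mem hM N 0 (by omega)
end
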